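/- Let G be a d-regular graph on n vertices (n even), with edge set E, so |E| = nd/2, and let k ≥ 3 be an integer with d ≥ 2, k² ≥ n, and 36·log k + 1 ≤ d. Let ρ : [n] → [k] be a coloring, let E' be a set of non-monochromatic edges of G, and let P := {p_e : e ∈ E'} ⊂ ℝ^{n+k} with N := |P|. Suppose: (a) for every subset A ⊆ E', the number of unordered pairs of distinct edges e, e' ∈ A with ρ(e) = ρ(e') is at most 18·|A|·log k; and (b) for every color c ∈ [k], the number of edges e ∈ E' with c ∈ ρ(e) is at most 1.1·nd/k. Then every partition of P into k clusters in which some cluster has size at least 16·kd has total k-means cost at least 3N + 4kd. -/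

import Mathlib

open Finset

/-- The 1-means (single-center) cost of a finite cluster `C ⊆ ℝ^D`:
`min_{c ∈ ℝ^D} ∑_{p ∈ C} ‖p - c‖²` (expressed as an infimum, which is attained). -/
noncomputable def oneMeansCost {D : ℕ} (C : Finset (EuclideanSpace ℝ (Fin D))) : ℝ :=
  ⨅ c : EuclideanSpace ℝ (Fin D), ∑ p ∈ C, ‖p - c‖ ^ 2

/-- The embedded point `p_e := e_u + e_v + e_{n+ρ(u)} + e_{n+ρ(v)} ∈ ℝ^{n+k}`. -/
noncomputable def embedEdge (n k : ℕ) (ρ : Fin n → Fin k) :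
    Sym2 (Fin n) → EuclideanSpace ℝ (Fin (n + k)) :=
  Sym2.lift ⟨fun u v =>
      EuclideanSpace.single (Fin.castAdd k u) (1 : ℝ) +
      EuclideanSpace.single (Fin.castAdd k v) (1 : ℝ) +
      EuclideanSpace.single (Fin.natAdd n (ρ u)) (1 : ℝ) +
      EuclideanSpace.single (Fin.natAdd n (ρ v)) (1 : ℝ),
    fun u v => by abel_nf⟩

/-- The color set `ρ(e) := {ρ(u), ρ(v)}` of an edge `e = {u,v}`. -/
def colorPair {n k : ℕ} (ρ : Fin n → Fin k) : Sym2 (Fin n) → Finset (Fin k) :=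
  Sym2.lift ⟨fun u v => {ρ u, ρ v}, fun u v => Finset.pair_comm (ρ u) (ρ v)⟩


section AuxLemmas

lemma single_inner {D : ℕ} (i j : Fin D) :
    (inner ℝ (EuclideanSpace.single i (1:ℝ)) (EuclideanSpace.single j (1:ℝ)) : ℝ) =
      if i = j then 1 else 0 := by
  rw [EuclideanSpace.inner_single_left]
  simp [EuclideanSpace.single_apply, eq_comm]

lemma cast_ne_nat {n k : ℕ} (a : Fin n) (b : Fin k) : Fin.castAdd k a ≠ Fin.natAdd n b := by
  simp [Fin.ext_iff]; omega

lemma natAdd_inj' {n k : ℕ} (a b : Fin k) : Fin.natAdd n a = Fin.natAdd n b ↔ a = b := by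
  simp [Fin.ext_iff]

lemma inner_embed (n k : ℕ) (ρ : Fin n → Fin k) (u v u' v' : Fin n) :
    (inner ℝ (embedEdge n k ρ s(u,v)) (embedEdge n k ρ s(u',v')) : ℝ) =
      ((if u = u' then (1:ℝ) else 0) + (if u = v' then 1 else 0) +
      (if v = u' then 1 else 0) + (if v = v' then 1 else 0)) +
      ((if ρ u = ρ u' then 1 else 0) + (if ρ u = ρ v' then 1 else 0) +
      (if ρ v = ρ u' then 1 else 0) + (if ρ v = ρ v' then 1 else 0)) := by
  simp only [embedEdge, Sym2.lift_mk]
  simp only [inner_add_left, inner_add_right, single_inner]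
  simp only [Fin.castAdd_inj, natAdd_inj', cast_ne_nat, (cast_ne_nat _ _).symm,
    if_neg (cast_ne_nat _ _), if_neg (Ne.symm (cast_ne_nat _ _))]
  norm_num
  ring

section
variable {α : Type*}

lemma two_ind [DecidableEq α] (a a' b' : α) (h : a' ≠ b') :
    (if a = a' then (1:ℝ) else 0) + (if a = b' then 1 else 0) ≤
      if a = a' ∨ a = b' then 1 else 0 := by
  split_ifs <;> simp_all

lemma quad_vertex [DecidableEq α] (a b a' b' : α) (hab : a ≠ b) (h2 : a' ≠ b')
    (h3 : ¬(a = a' ∧ b = b')) (h4 : ¬(a = b' ∧ b = a')) :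
    (if a = a' then (1:ℝ) else 0) + (if a = b' then 1 else 0) +
      (if b = a' then 1 else 0) + (if b = b' then 1 else 0) ≤
      if a = a' ∨ a = b' ∨ b = a' ∨ b = b' then 1 else 0 := by
  split_ifs <;> simp_all

lemma quad_color_ne [DecidableEq α] (a b a' b' : α) (hab : a ≠ b) (h2 : a' ≠ b')
    (hne : ({a, b} : Finset α) ≠ {a', b'}) :
    (if a = a' then (1:ℝ) else 0) + (if a = b' then 1 else 0) +
      (if b = a' then 1 else 0) + (if b = b' then 1 else 0) ≤ 1 := by
  split_ifs <;> simp_all [Finset.pair_comm] <;> norm_num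

lemma quad_color_two [DecidableEq α] (a b a' b' : α) (hab : a ≠ b) (h2 : a' ≠ b') :
    (if a = a' then (1:ℝ) else 0) + (if a = b' then 1 else 0) +
      (if b = a' then 1 else 0) + (if b = b' then 1 else 0) ≤ 2 := by
  split_ifs <;> simp_all <;> norm_num

end

lemma quad_color_sum {k : ℕ} (a b a' b' : Fin k) (hab : a ≠ b) (h2 : a' ≠ b') :
    (if a = a' then (1:ℝ) else 0) + (if a = b' then 1 else 0) +
      (if b = a' then 1 else 0) + (if b = b' then 1 else 0) ≤
    ∑ c : Fin k, (if c ∈ ({a, b} : Finset (Fin k)) then (1:ℝ) else 0) *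
      (if c ∈ ({a', b'} : Finset (Fin k)) then 1 else 0) := by
  have hsub : ({a, b} : Finset (Fin k)) ⊆ univ := subset_univ _
  have h1 : ∑ c ∈ ({a, b} : Finset (Fin k)),
      (if c ∈ ({a, b} : Finset (Fin k)) then (1:ℝ) else 0) *
      (if c ∈ ({a', b'} : Finset (Fin k)) then 1 else 0) ≤
      ∑ c : Fin k, (if c ∈ ({a, b} : Finset (Fin k)) then (1:ℝ) else 0) *
      (if c ∈ ({a', b'} : Finset (Fin k)) then 1 else 0) := by
    apply Finset.sum_le_sum_of_subset_of_nonneg hsub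
    intro c _ _
    positivity
  refine le_trans ?_ h1
  rw [Finset.sum_pair hab]
  simp only [Finset.mem_insert, Finset.mem_singleton, eq_self_iff_true, true_or, or_true,
    if_true, one_mul]
  linarith [two_ind a a' b' h2, two_ind b a' b' h2]

lemma norm_embed_sq (n k : ℕ) (ρ : Fin n → Fin k) {e : Sym2 (Fin n)}
    (heD : ¬e.IsDiag) (heρ : ¬(Sym2.map ρ e).IsDiag) :
    ‖embedEdge n k ρ e‖ ^ 2 = 4 := by
  induction e using Sym2.inductionOn with
  | hf u v =>
    simp only [Sym2.map_pair_eq, Sym2.mk_isDiag_iff] at heD heρ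
    rw [← real_inner_self_eq_norm_sq, inner_embed]
    simp [heD, heρ, Ne.symm heD, Ne.symm heρ]
    norm_num

open Classical in
/-- Bound B: for distinct edges. -/
lemma normB (n k : ℕ) (ρ : Fin n → Fin k) {e f : Sym2 (Fin n)}
    (heD : ¬e.IsDiag) (hfD : ¬f.IsDiag)
    (heρ : ¬(Sym2.map ρ e).IsDiag) (hfρ : ¬(Sym2.map ρ f).IsDiag) (hef : e ≠ f) :
    8 - 2 * (if ∃ x, x ∈ e ∧ x ∈ f then (1:ℝ) else 0)
      - 2 * (∑ c : Fin k, (if c ∈ colorPair ρ e then (1:ℝ) else 0) *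
          (if c ∈ colorPair ρ f then 1 else 0))
      ≤ ‖embedEdge n k ρ e - embedEdge n k ρ f‖ ^ 2 := by
  induction e, f using Sym2.inductionOn₂ with
  | _ u v u' v' =>
    simp only [Sym2.map_pair_eq, Sym2.mk_isDiag_iff] at heD hfD heρ hfρ
    rw [norm_sub_sq_real, norm_embed_sq n k ρ (by simp [heD]) (by simp [heρ]),
      norm_embed_sq n k ρ (by simp [hfD]) (by simp [hfρ]), inner_embed]
    have hveq : (if ∃ x, x ∈ s(u,v) ∧ x ∈ s(u',v') then (1:ℝ) else 0) =
        if u = u' ∨ u = v' ∨ v = u' ∨ v = v' then 1 else 0 := by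
      apply if_congr _ rfl rfl
      constructor
      · rintro ⟨x, hx1, hx2⟩
        rw [Sym2.mem_iff] at hx1 hx2
        rcases hx1 with h | h <;> rcases hx2 with h' | h' <;> subst h <;> tauto
      · rintro (h | h | h | h) <;> [exact ⟨u, by simp [h]⟩; exact ⟨u, by simp [h]⟩;
          exact ⟨v, by simp [h]⟩; exact ⟨v, by simp [h]⟩]
    rw [hveq]
    have hne2 : ¬(u = u' ∧ v = v') ∧ ¬(u = v' ∧ v = u') := by
      constructor <;> rintro ⟨h1, h2⟩ <;> subst h1 <;> subst h2 <;>
        simp [Sym2.eq_swap] at hef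
    have hV := quad_vertex u v u' v' heD hfD hne2.1 hne2.2
    have hC := quad_color_sum (ρ u) (ρ v) (ρ u') (ρ v') heρ hfρ
    have hcp1 : colorPair ρ s(u,v) = {ρ u, ρ v} := rfl
    have hcp2 : colorPair ρ s(u',v') = {ρ u', ρ v'} := rfl
    rw [hcp1, hcp2]
    linarith

open Classical in
/-- Bound A: for all pairs of edges. -/
lemma normA (n k : ℕ) (ρ : Fin n → Fin k) {e f : Sym2 (Fin n)}
    (heD : ¬e.IsDiag) (hfD : ¬f.IsDiag)
    (heρ : ¬(Sym2.map ρ e).IsDiag) (hfρ : ¬(Sym2.map ρ f).IsDiag) :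
    6 - 4 * (if colorPair ρ e = colorPair ρ f then (1:ℝ) else 0)
      - 2 * (if ∃ x, x ∈ e ∧ x ∈ f then (1:ℝ) else 0)
      ≤ ‖embedEdge n k ρ e - embedEdge n k ρ f‖ ^ 2 := by
  by_cases hef : e = f
  · subst hef
    rw [if_pos rfl, if_pos ⟨e.out.1, Sym2.out_fst_mem e, Sym2.out_fst_mem e⟩]
    norm_num
  induction e, f using Sym2.inductionOn₂ with
  | _ u v u' v' =>
    simp only [Sym2.map_pair_eq, Sym2.mk_isDiag_iff] at heD hfD heρ hfρ
    rw [norm_sub_sq_real, norm_embed_sq n k ρ (by simp [heD]) (by simp [heρ]),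
      norm_embed_sq n k ρ (by simp [hfD]) (by simp [hfρ]), inner_embed]
    have hveq : (if ∃ x, x ∈ s(u,v) ∧ x ∈ s(u',v') then (1:ℝ) else 0) =
        if u = u' ∨ u = v' ∨ v = u' ∨ v = v' then 1 else 0 := by
      apply if_congr _ rfl rfl
      constructor
      · rintro ⟨x, hx1, hx2⟩
        rw [Sym2.mem_iff] at hx1 hx2
        rcases hx1 with h | h <;> rcases hx2 with h' | h' <;> subst h <;> tauto
      · rintro (h | h | h | h) <;> [exact ⟨u, by simp [h]⟩; exact ⟨u, by simp [h]⟩;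
          exact ⟨v, by simp [h]⟩; exact ⟨v, by simp [h]⟩]
    rw [hveq]
    have hne2 : ¬(u = u' ∧ v = v') ∧ ¬(u = v' ∧ v = u') := by
      constructor <;> rintro ⟨h1, h2⟩ <;> subst h1 <;> subst h2 <;>
        simp [Sym2.eq_swap] at hef
    have hV := quad_vertex u v u' v' heD hfD hne2.1 hne2.2
    have hcp1 : colorPair ρ s(u,v) = {ρ u, ρ v} := rfl
    have hcp2 : colorPair ρ s(u',v') = {ρ u', ρ v'} := rfl
    rw [hcp1, hcp2]
    by_cases hcp : ({ρ u, ρ v} : Finset (Fin k)) = {ρ u', ρ v'}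
    · have hC := quad_color_two (ρ u) (ρ v) (ρ u') (ρ v') heρ hfρ
      rw [if_pos hcp]
      linarith
    · have hC := quad_color_ne (ρ u) (ρ v) (ρ u') (ρ v') heρ hfρ hcp
      rw [if_neg hcp]
      linarith

lemma oneMeansCost_nonneg {D : ℕ} (C : Finset (EuclideanSpace ℝ (Fin D))) :
    0 ≤ oneMeansCost C :=
  Real.iInf_nonneg fun c => Finset.sum_nonneg fun p _ => by positivity

lemma pair_sum_le_cost {D : ℕ} (C : Finset (EuclideanSpace ℝ (Fin D))) :
    ∑ p ∈ C, ∑ q ∈ C, ‖p - q‖ ^ 2 ≤ 2 * C.card * oneMeansCost C := by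
  rcases C.eq_empty_or_nonempty with rfl | hC
  · simp [oneMeansCost]
  have hm : (0:ℝ) < C.card := by exact_mod_cast hC.card_pos
  rw [mul_comm, ← div_le_iff₀ (by positivity)]
  apply le_ciInf
  intro c
  rw [div_le_iff₀ (by positivity), mul_comm]
  have key : ∑ p ∈ C, ∑ q ∈ C, ‖p - q‖ ^ 2 =
      2 * C.card * ∑ p ∈ C, ‖p - c‖ ^ 2 - 2 * ‖∑ p ∈ C, (p - c)‖ ^ 2 := by
    have expand : ∀ p q : EuclideanSpace ℝ (Fin D), ‖p - q‖ ^ 2 =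
        ‖p - c‖ ^ 2 - 2 * (inner ℝ (p - c) (q - c) : ℝ) + ‖q - c‖ ^ 2 := by
      intro p q
      have : p - q = (p - c) - (q - c) := by abel
      rw [this, norm_sub_sq_real]
    calc ∑ p ∈ C, ∑ q ∈ C, ‖p - q‖ ^ 2
        = ∑ p ∈ C, ∑ q ∈ C,
            (‖p - c‖ ^ 2 - 2 * (inner ℝ (p - c) (q - c) : ℝ) + ‖q - c‖ ^ 2) := by
          refine Finset.sum_congr rfl fun p _ => Finset.sum_congr rfl fun q _ => expand p q
      _ = 2 * C.card * ∑ p ∈ C, ‖p - c‖ ^ 2 - 2 * ‖∑ p ∈ C, (p - c)‖ ^ 2 := by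
          have hiq : ∑ p ∈ C, ∑ q ∈ C, (inner ℝ (p - c) (q - c) : ℝ) =
              ‖∑ p ∈ C, (p - c)‖ ^ 2 := by
            rw [← real_inner_self_eq_norm_sq, sum_inner]
            exact Finset.sum_congr rfl fun p _ => by rw [inner_sum]
          simp only [Finset.sum_add_distrib, Finset.sum_sub_distrib, Finset.sum_const,
            nsmul_eq_mul, ← Finset.mul_sum, ← Finset.sum_mul] at hiq ⊢
          rw [hiq]
          ring
  rw [key]
  have : (0:ℝ) ≤ ‖∑ p ∈ C, (p - c)‖ ^ 2 := by positivity
  linarith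

lemma csum_le_two {n k : ℕ} (ρ : Fin n → Fin k) {e f : Sym2 (Fin n)}
    (heρ : ¬(Sym2.map ρ e).IsDiag) :
    (∑ c : Fin k, (if c ∈ colorPair ρ e then (1:ℝ) else 0) *
      (if c ∈ colorPair ρ f then 1 else 0)) ≤ 2 := by
  have h1 : ∀ c : Fin k, (if c ∈ colorPair ρ e then (1:ℝ) else 0) *
      (if c ∈ colorPair ρ f then 1 else 0) ≤ if c ∈ colorPair ρ e then (1:ℝ) else 0 := by
    intro c; split_ifs <;> norm_num
  calc (∑ c : Fin k, (if c ∈ colorPair ρ e then (1:ℝ) else 0) *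
      (if c ∈ colorPair ρ f then 1 else 0))
      ≤ ∑ c : Fin k, (if c ∈ colorPair ρ e then (1:ℝ) else 0) := Finset.sum_le_sum fun c _ => h1 c
    _ = ((colorPair ρ e).card : ℝ) := by
        rw [Finset.sum_boole]
        congr 1
        congr 1
        ext c
        simp
    _ ≤ 2 := by
        induction e using Sym2.inductionOn with
        | hf u v =>
          simp only [Sym2.map_pair_eq, Sym2.mk_isDiag_iff] at heρ
          have : colorPair ρ s(u,v) = {ρ u, ρ v} := rfl
          rw [this, Finset.card_pair heρ]
          norm_num

lemma emb_injOn {n k : ℕ} (ρ : Fin n → Fin k) {e f : Sym2 (Fin n)}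
    (heD : ¬e.IsDiag) (hfD : ¬f.IsDiag)
    (heρ : ¬(Sym2.map ρ e).IsDiag) (hfρ : ¬(Sym2.map ρ f).IsDiag)
    (h : embedEdge n k ρ e = embedEdge n k ρ f) : e = f := by
  by_contra hef
  have hB := normB n k ρ heD hfD heρ hfρ hef
  have h0 : ‖embedEdge n k ρ e - embedEdge n k ρ f‖ ^ 2 = 0 := by rw [h]; simp
  have hcs := csum_le_two ρ (f := f) heρ
  have hv : (if ∃ x, x ∈ e ∧ x ∈ f then (1:ℝ) else 0) ≤ 1 := by split_ifs <;> norm_num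
  rw [h0] at hB
  linarith

lemma finset_pair_eq {α : Type*} [DecidableEq α] {a b c d : α} (hab : a ≠ b)
    (h : ({a, b} : Finset α) = {c, d}) : (a = c ∧ b = d) ∨ (a = d ∧ b = c) := by
  have ha : a ∈ ({c, d} : Finset α) := by rw [← h]; simp
  have hb : b ∈ ({c, d} : Finset α) := by rw [← h]; simp
  have hc : c ∈ ({a, b} : Finset α) := by rw [h]; simp
  have hd : d ∈ ({a, b} : Finset α) := by rw [h]; simp
  simp only [Finset.mem_insert, Finset.mem_singleton] at ha hb hc hd
  rcases ha with h1 | h1 <;> rcases hb with h2 | h2 <;> subst h1 <;> simp_all <;> tauto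

open Classical in
lemma count_vsh {n d : ℕ} (G : SimpleGraph (Fin n)) [DecidableRel G.Adj]
    (hreg : G.IsRegularOfDegree d) {E' A : Finset (Sym2 (Fin n))} (hE'G : E' ⊆ G.edgeFinset)
    (hA : A ⊆ E') :
    ∑ e ∈ A, ∑ f ∈ A, (if ∃ x, x ∈ e ∧ x ∈ f then (1:ℝ) else 0)
      ≤ 2 * d * A.card := by
  have hrow : ∀ e ∈ A, ∑ f ∈ A, (if ∃ x, x ∈ e ∧ x ∈ f then (1:ℝ) else 0) ≤ 2 * d := by
    intro e he
    obtain ⟨u, v, rfl⟩ : ∃ u v, e = s(u, v) := by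
      induction e using Sym2.ind with
      | _ u v => exact ⟨u, v, rfl⟩
    rw [Finset.sum_boole]
    have hsub : A.filter (fun f => ∃ x, x ∈ s(u,v) ∧ x ∈ f) ⊆
        (E'.filter (fun f => u ∈ f)) ∪ (E'.filter (fun f => v ∈ f)) := by
      intro f hf
      rw [Finset.mem_filter] at hf
      obtain ⟨hfA, x, hx1, hx2⟩ := hf
      rw [Sym2.mem_iff] at hx1
      rw [Finset.mem_union, Finset.mem_filter, Finset.mem_filter]
      rcases hx1 with rfl | rfl
      · exact Or.inl ⟨hA hfA, hx2⟩
      · exact Or.inr ⟨hA hfA, hx2⟩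
    have hd1 : ∀ w : Fin n, (E'.filter (fun f => w ∈ f)).card ≤ d := by
      intro w
      have hsub2 : E'.filter (fun f => w ∈ f) ⊆ G.incidenceFinset w := by
        intro f hf
        rw [Finset.mem_filter] at hf
        rw [SimpleGraph.mem_incidenceFinset]
        exact ⟨(SimpleGraph.mem_edgeFinset).mp (hE'G hf.1), hf.2⟩
      calc (E'.filter (fun f => w ∈ f)).card ≤ (G.incidenceFinset w).card :=
            Finset.card_le_card hsub2
        _ = G.degree w := G.card_incidenceFinset_eq_degree w
        _ = d := hreg w
    calc ((A.filter (fun f => ∃ x, x ∈ s(u,v) ∧ x ∈ f)).card : ℝ)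
        ≤ (((E'.filter (fun f => u ∈ f)) ∪ (E'.filter (fun f => v ∈ f))).card : ℝ) := by
          exact_mod_cast Finset.card_le_card hsub
      _ ≤ ((E'.filter (fun f => u ∈ f)).card : ℝ) + ((E'.filter (fun f => v ∈ f)).card : ℝ) := by
          exact_mod_cast Finset.card_union_le _ _
      _ ≤ (d : ℝ) + (d : ℝ) := by
          gcongr <;> exact_mod_cast hd1 _
      _ = 2 * d := by ring
  calc ∑ e ∈ A, ∑ f ∈ A, (if ∃ x, x ∈ e ∧ x ∈ f then (1:ℝ) else 0)
      ≤ ∑ _e ∈ A, (2 * d : ℝ) := Finset.sum_le_sum hrow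
    _ = 2 * d * A.card := by rw [Finset.sum_const, nsmul_eq_mul]; ring

open Classical in
lemma count_cpe {n k : ℕ} (ρ : Fin n → Fin k) {E' A : Finset (Sym2 (Fin n))} (hA : A ⊆ E')
    (ha : ∀ B ⊆ E',
      (((B.powersetCard 2).filter
          (fun s => ∃ e ∈ s, ∃ e' ∈ s, e ≠ e' ∧ colorPair ρ e = colorPair ρ e')).card : ℝ) ≤
        18 * (B.card : ℝ) * Real.log k) :
    ∑ e ∈ A, ∑ f ∈ A, (if colorPair ρ e = colorPair ρ f then (1:ℝ) else 0)
      ≤ 36 * A.card * Real.log k + A.card := by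
  set T := (A.powersetCard 2).filter
      (fun s => ∃ e ∈ s, ∃ e' ∈ s, e ≠ e' ∧ colorPair ρ e = colorPair ρ e') with hT
  set P := (A ×ˢ A).filter (fun p => p.1 ≠ p.2 ∧ colorPair ρ p.1 = colorPair ρ p.2) with hP
  have step1 : ∑ e ∈ A, ∑ f ∈ A, (if colorPair ρ e = colorPair ρ f then (1:ℝ) else 0)
      ≤ (P.card : ℝ) + A.card := by
    have pointwise : ∀ e f : Sym2 (Fin n),
        (if colorPair ρ e = colorPair ρ f then (1:ℝ) else 0) ≤
        (if e ≠ f ∧ colorPair ρ e = colorPair ρ f then (1:ℝ) else 0) +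
        (if e = f then (1:ℝ) else 0) := by
      intro e f; split_ifs <;> simp_all
    calc ∑ e ∈ A, ∑ f ∈ A, (if colorPair ρ e = colorPair ρ f then (1:ℝ) else 0)
        ≤ ∑ e ∈ A, ∑ f ∈ A, ((if e ≠ f ∧ colorPair ρ e = colorPair ρ f then (1:ℝ) else 0) +
            (if e = f then (1:ℝ) else 0)) :=
          Finset.sum_le_sum fun e _ => Finset.sum_le_sum fun f _ => pointwise e f
      _ = (∑ e ∈ A, ∑ f ∈ A, (if e ≠ f ∧ colorPair ρ e = colorPair ρ f then (1:ℝ) else 0)) +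
          (∑ e ∈ A, ∑ f ∈ A, (if e = f then (1:ℝ) else 0)) := by
          rw [← Finset.sum_add_distrib]
          exact Finset.sum_congr rfl fun e _ => by rw [← Finset.sum_add_distrib]
      _ ≤ (P.card : ℝ) + A.card := by
          have h1 : (∑ e ∈ A, ∑ f ∈ A, (if e ≠ f ∧ colorPair ρ e = colorPair ρ f
              then (1:ℝ) else 0)) = (P.card : ℝ) := by
            rw [hP, ← Finset.sum_product', Finset.sum_boole]
          have h2 : (∑ e ∈ A, ∑ f ∈ A, (if e = f then (1:ℝ) else 0)) ≤ (A.card : ℝ) := by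
            have : ∀ e ∈ A, (∑ f ∈ A, (if e = f then (1:ℝ) else 0)) ≤ 1 := by
              intro e he
              rw [Finset.sum_boole]
              have : A.filter (fun f => e = f) ⊆ {e} := by
                intro f hf; rw [Finset.mem_filter] at hf
                simp [← hf.2]
              have := Finset.card_le_card this
              simp at this
              exact_mod_cast this
            calc (∑ e ∈ A, ∑ f ∈ A, (if e = f then (1:ℝ) else 0)) ≤ ∑ _e ∈ A, (1:ℝ) :=
                Finset.sum_le_sum this
              _ = A.card := by simp
          linarith
  have step2 : P.card ≤ 2 * T.card := by
    have himg : P.image (fun p => ({p.1, p.2} : Finset (Sym2 (Fin n)))) ⊆ T := by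
      intro b hb
      rw [Finset.mem_image] at hb
      obtain ⟨p, hp, rfl⟩ := hb
      rw [hP, Finset.mem_filter, Finset.mem_product] at hp
      obtain ⟨⟨hp1, hp2⟩, hne, hcp⟩ := hp
      rw [hT, Finset.mem_filter, Finset.mem_powersetCard]
      refine ⟨⟨?_, Finset.card_pair hne⟩, p.1, by simp, p.2, by simp, hne, hcp⟩
      intro x hx
      simp only [Finset.mem_insert, Finset.mem_singleton] at hx
      rcases hx with rfl | rfl <;> assumption
    have hfib : ∀ b ∈ P.image (fun p => ({p.1, p.2} : Finset (Sym2 (Fin n)))),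
        (P.filter (fun p => ({p.1, p.2} : Finset (Sym2 (Fin n))) = b)).card ≤ 2 := by
      intro b hb
      rw [Finset.mem_image] at hb
      obtain ⟨p0, hp0, rfl⟩ := hb
      have hsub : (P.filter (fun p => ({p.1, p.2} : Finset (Sym2 (Fin n))) = {p0.1, p0.2}))
          ⊆ {p0, (p0.2, p0.1)} := by
        intro q hq
        rw [Finset.mem_filter] at hq
        obtain ⟨hqP, hqeq⟩ := hq
        rw [hP, Finset.mem_filter] at hqP
        have hqne : q.1 ≠ q.2 := hqP.2.1
        rcases finset_pair_eq hqne hqeq with ⟨h1, h2⟩ | ⟨h1, h2⟩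
        · simp only [Finset.mem_insert, Finset.mem_singleton]
          left; exact Prod.ext h1 h2
        · simp only [Finset.mem_insert, Finset.mem_singleton]
          right; exact Prod.ext h1 h2
      calc _ ≤ ({p0, (p0.2, p0.1)} : Finset ((Sym2 (Fin n)) × (Sym2 (Fin n)))).card :=
            Finset.card_le_card hsub
        _ ≤ 2 := Finset.card_insert_le _ _ |>.trans (by simp)
    calc P.card ≤ 2 * (P.image (fun p => ({p.1, p.2} : Finset (Sym2 (Fin n))))).card :=
          Finset.card_le_mul_card_image P 2 hfib
      _ ≤ 2 * T.card := by
          have := Finset.card_le_card himg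
          omega
  have step3 := ha A hA
  calc ∑ e ∈ A, ∑ f ∈ A, (if colorPair ρ e = colorPair ρ f then (1:ℝ) else 0)
      ≤ (P.card : ℝ) + A.card := step1
    _ ≤ 2 * (T.card : ℝ) + A.card := by
        have : (P.card : ℝ) ≤ 2 * T.card := by exact_mod_cast step2
        linarith
    _ ≤ 36 * A.card * Real.log k + A.card := by
        rw [hT] at *
        linarith

lemma card_colorPair {n k : ℕ} (ρ : Fin n → Fin k) {e : Sym2 (Fin n)}
    (heρ : ¬(Sym2.map ρ e).IsDiag) : (colorPair ρ e).card = 2 := by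
  induction e using Sym2.ind with
  | _ u v =>
    simp only [Sym2.map_pair_eq, Sym2.mk_isDiag_iff] at heρ
    exact Finset.card_pair heρ

lemma ind_sum_card {k : ℕ} (s : Finset (Fin k)) :
    ∑ c : Fin k, (if c ∈ s then (1:ℝ) else 0) = s.card := by
  rw [Finset.sum_boole]
  congr 2
  ext c
  simp

open Classical in
lemma count_csh {n k : ℕ} (d : ℕ) (ρ : Fin n → Fin k) {E' A : Finset (Sym2 (Fin n))}
    (hA : A ⊆ E')
    (hnm : ∀ e ∈ E', ¬ (Sym2.map ρ e).IsDiag)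
    (hb : ∀ c : Fin k,
      ((E'.filter (fun e => c ∈ colorPair ρ e)).card : ℝ) ≤ 1.1 * n * d / k) :
    ∑ e ∈ A, ∑ f ∈ A, (∑ c : Fin k, (if c ∈ colorPair ρ e then (1:ℝ) else 0) *
        (if c ∈ colorPair ρ f then 1 else 0))
      ≤ (1.1 * n * d / k) * (2 * A.card) := by
  set X : Fin k → ℝ := fun c => ∑ e ∈ A, (if c ∈ colorPair ρ e then (1:ℝ) else 0) with hX
  have hswap : ∑ e ∈ A, ∑ f ∈ A, (∑ c : Fin k, (if c ∈ colorPair ρ e then (1:ℝ) else 0) *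
      (if c ∈ colorPair ρ f then 1 else 0)) = ∑ c : Fin k, X c * X c := by
    calc ∑ e ∈ A, ∑ f ∈ A, (∑ c : Fin k, (if c ∈ colorPair ρ e then (1:ℝ) else 0) *
        (if c ∈ colorPair ρ f then 1 else 0))
        = ∑ e ∈ A, ∑ c : Fin k, ∑ f ∈ A, (if c ∈ colorPair ρ e then (1:ℝ) else 0) *
            (if c ∈ colorPair ρ f then 1 else 0) :=
          Finset.sum_congr rfl fun e _ => Finset.sum_comm
      _ = ∑ e ∈ A, ∑ c : Fin k, (if c ∈ colorPair ρ e then (1:ℝ) else 0) * X c := by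
          refine Finset.sum_congr rfl fun e _ => Finset.sum_congr rfl fun c _ => ?_
          rw [hX, Finset.mul_sum]
      _ = ∑ c : Fin k, ∑ e ∈ A, (if c ∈ colorPair ρ e then (1:ℝ) else 0) * X c :=
          Finset.sum_comm
      _ = ∑ c : Fin k, X c * X c := by
          refine Finset.sum_congr rfl fun c _ => ?_
          rw [← Finset.sum_mul]
  rw [hswap]
  have hXnonneg : ∀ c, 0 ≤ X c := by
    intro c
    exact Finset.sum_nonneg fun e _ => by positivity
  have hXle : ∀ c, X c ≤ 1.1 * n * d / k := by
    intro c
    rw [hX]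
    simp only
    rw [Finset.sum_boole]
    refine le_trans ?_ (hb c)
    exact_mod_cast Finset.card_le_card (Finset.filter_subset_filter _ hA)
  have hXsum : ∑ c : Fin k, X c = 2 * A.card := by
    rw [hX]
    simp only
    rw [Finset.sum_comm]
    calc ∑ e ∈ A, ∑ c : Fin k, (if c ∈ colorPair ρ e then (1:ℝ) else 0)
        = ∑ e ∈ A, ((colorPair ρ e).card : ℝ) :=
          Finset.sum_congr rfl fun e _ => ind_sum_card _
      _ = ∑ _e ∈ A, (2:ℝ) := Finset.sum_congr rfl fun e he => by
          rw [card_colorPair ρ (hnm e (hA he))]; norm_num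
      _ = 2 * A.card := by rw [Finset.sum_const, nsmul_eq_mul]; ring
  calc ∑ c : Fin k, X c * X c ≤ ∑ c : Fin k, (1.1 * n * d / k) * X c :=
        Finset.sum_le_sum fun c _ => mul_le_mul_of_nonneg_right (hXle c) (hXnonneg c)
    _ = (1.1 * n * d / k) * (2 * A.card) := by rw [← Finset.mul_sum, hXsum]

end AuxLemmas

set_option maxHeartbeats 1000000 in
open Classical in
/-- any partition of the embedded point set into `k` clusters one of which has
size at least `16·k·d` has `k`-means cost at least `3N + 4kd`. -/
theorem stmt3 (n d k : ℕ) (hn : Even n) (G : SimpleGraph (Fin n)) [DecidableRel G.Adj]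
    (hreg : G.IsRegularOfDegree d)
    (hk3 : 3 ≤ k) (hd2 : 2 ≤ d) (hkn : n ≤ k ^ 2)
    (hdlog : 36 * Real.log k + 1 ≤ (d : ℝ))
    (ρ : Fin n → Fin k)
    (E' : Finset (Sym2 (Fin n))) (hE'G : E' ⊆ G.edgeFinset)
    (hnm : ∀ e ∈ E', ¬ (Sym2.map ρ e).IsDiag)
    (ha : ∀ A ⊆ E',
      (((A.powersetCard 2).filter
          (fun s => ∃ e ∈ s, ∃ e' ∈ s, e ≠ e' ∧ colorPair ρ e = colorPair ρ e')).card : ℝ) ≤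
        18 * (A.card : ℝ) * Real.log k)
    (hb : ∀ c : Fin k,
      ((E'.filter (fun e => c ∈ colorPair ρ e)).card : ℝ) ≤ 1.1 * n * d / k)
    (C : Fin k → Finset (EuclideanSpace ℝ (Fin (n + k))))
    (hdisj : ∀ i j, i ≠ j → Disjoint (C i) (C j))
    (hcover : Finset.univ.biUnion C = E'.image (embedEdge n k ρ))
    (hbig : ∃ i, 16 * k * d ≤ (C i).card) :
    3 * ((E'.image (embedEdge n k ρ)).card : ℝ) + 4 * (k * d) ≤
      ∑ i : Fin k, oneMeansCost (C i) := by
  classical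
  set emb := embedEdge n k ρ with hemb
  have heD : ∀ e ∈ E', ¬ e.IsDiag := fun e he =>
    G.not_isDiag_of_mem_edgeSet (SimpleGraph.mem_edgeFinset.mp (hE'G he))
  set A : Fin k → Finset (Sym2 (Fin n)) := fun i => E'.filter (fun e => emb e ∈ C i) with hA
  have hAE : ∀ i, A i ⊆ E' := fun i => Finset.filter_subset _ _
  have hinj : ∀ x ∈ E', ∀ y ∈ E', emb x = emb y → x = y := fun x hx y hy hxy =>
    emb_injOn ρ (heD x hx) (heD y hy) (hnm x hx) (hnm y hy) hxy
  have hCi : ∀ i, C i = (A i).image emb := by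
    intro i; ext p
    constructor
    · intro hp
      have hpP : p ∈ E'.image emb := by
        rw [← hcover]; exact Finset.mem_biUnion.mpr ⟨i, Finset.mem_univ i, hp⟩
      obtain ⟨e, heE, rfl⟩ := Finset.mem_image.mp hpP
      exact Finset.mem_image.mpr ⟨e, Finset.mem_filter.mpr ⟨heE, hp⟩, rfl⟩
    · intro hp
      obtain ⟨e, heA, rfl⟩ := Finset.mem_image.mp hp
      exact (Finset.mem_filter.mp heA).2
  have hcard : ∀ i, (C i).card = (A i).card := by
    intro i
    rw [hCi i]
    exact Finset.card_image_of_injOn fun x hx y hy =>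
      hinj x (hAE i hx) y (hAE i hy)
  have hN : ∑ i, ((A i).card : ℝ) = ((E'.image emb).card : ℝ) := by
    have hbi : (Finset.univ.biUnion C).card = ∑ i, (C i).card :=
      Finset.card_biUnion fun i _ j _ hij => hdisj i j hij
    rw [hcover] at hbi
    have hnat : ∑ i, (A i).card = (E'.image emb).card := by
      rw [hbi]
      exact Finset.sum_congr rfl fun i _ => (hcard i).symm
    exact_mod_cast hnat
  have hS : ∀ i, ∑ p ∈ C i, ∑ q ∈ C i, ‖p - q‖ ^ 2 =
      ∑ e ∈ A i, ∑ f ∈ A i, ‖emb e - emb f‖ ^ 2 := by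
    intro i
    rw [hCi i]
    rw [Finset.sum_image (fun x hx y hy => hinj x (hAE i hx) y (hAE i hy))]
    refine Finset.sum_congr rfl fun e he => ?_
    rw [Finset.sum_image (fun x hx y hy => hinj x (hAE i hx) y (hAE i hy))]
  -- arithmetic facts
  have hkR : (3:ℝ) ≤ k := by exact_mod_cast hk3
  have hk1 : (1:ℝ) ≤ k := by linarith
  have hlogk : 0 ≤ Real.log k := Real.log_nonneg hk1
  have h36 : 36 * Real.log k ≤ (d:ℝ) - 1 := by linarith
  have hnk : (n:ℝ) ≤ (k:ℝ) ^ 2 := by exact_mod_cast hkn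
  have hkpos : (0:ℝ) < k := by linarith
  have hdR : (2:ℝ) ≤ d := by exact_mod_cast hd2
  have hnn : (0:ℝ) ≤ n := by positivity
  -- small-cluster bound, valid for every cluster
  have hsmall : ∀ i, 3 * ((A i).card : ℝ) - 4 * d ≤ oneMeansCost (C i) := by
    intro i
    set m : ℝ := ((A i).card : ℝ) with hm
    have hm0 : 0 ≤ m := by rw [hm]; exact Nat.cast_nonneg _
    rcases (A i).eq_empty_or_nonempty with hAe | hAne
    · have : m = 0 := by rw [hm, hAe]; simp
      rw [this]
      have := oneMeansCost_nonneg (C i)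
      linarith
    have hm1 : (1:ℝ) ≤ m := by
      rw [hm]; exact_mod_cast hAne.card_pos
    have hpair := pair_sum_le_cost (C i)
    rw [hS i, hcard i] at hpair
    have hQ1 := count_cpe ρ (hAE i) ha
    have hQ2 := count_vsh G hreg hE'G (hAE i)
    have hlow : ∀ e ∈ A i, ∀ f ∈ A i,
        6 - 4 * (if colorPair ρ e = colorPair ρ f then (1:ℝ) else 0)
          - 2 * (if ∃ x, x ∈ e ∧ x ∈ f then (1:ℝ) else 0)
          ≤ ‖emb e - emb f‖ ^ 2 := fun e he f hf =>
      normA n k ρ (heD e (hAE i he)) (heD f (hAE i hf)) (hnm e (hAE i he)) (hnm f (hAE i hf))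
    have hsum : 6 * m * m
        - 4 * (∑ e ∈ A i, ∑ f ∈ A i, (if colorPair ρ e = colorPair ρ f then (1:ℝ) else 0))
        - 2 * (∑ e ∈ A i, ∑ f ∈ A i, (if ∃ x, x ∈ e ∧ x ∈ f then (1:ℝ) else 0))
        ≤ ∑ e ∈ A i, ∑ f ∈ A i, ‖emb e - emb f‖ ^ 2 := by
      have expand : ∑ e ∈ A i, ∑ f ∈ A i,
          ((6:ℝ) - 4 * (if colorPair ρ e = colorPair ρ f then (1:ℝ) else 0)
            - 2 * (if ∃ x, x ∈ e ∧ x ∈ f then (1:ℝ) else 0)) =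
          6 * m * m
          - 4 * (∑ e ∈ A i, ∑ f ∈ A i, (if colorPair ρ e = colorPair ρ f then (1:ℝ) else 0))
          - 2 * (∑ e ∈ A i, ∑ f ∈ A i, (if ∃ x, x ∈ e ∧ x ∈ f then (1:ℝ) else 0)) := by
        simp only [Finset.sum_sub_distrib, Finset.sum_const, nsmul_eq_mul, ← Finset.mul_sum]
        rw [hm]
        ring
      rw [← expand]
      exact Finset.sum_le_sum fun e he => Finset.sum_le_sum fun f hf => hlow e he f hf
    -- combine
    have hmain : 2 * m * (3 * m - 4 * d) ≤ 2 * m * oneMeansCost (C i) := by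
      nlinarith [hsum, hpair, hQ1, hQ2, hm1, hlogk, h36]
    have h2m : (0:ℝ) < 2 * m := by linarith
    exact le_of_mul_le_mul_left hmain h2m
  -- big-cluster bound
  obtain ⟨i0, hbig⟩ := hbig
  have hbigcost : 3 * ((A i0).card : ℝ) + 8 * (k * d) ≤ oneMeansCost (C i0) := by
    set m : ℝ := ((A i0).card : ℝ) with hm
    have hbigm : 16 * (k:ℝ) * d ≤ m := by
      rw [hm, ← hcard i0]
      exact_mod_cast hbig
    have hm1 : (1:ℝ) ≤ m := by nlinarith
    have hpair := pair_sum_le_cost (C i0)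
    rw [hS i0, hcard i0] at hpair
    have hQ2 := count_vsh G hreg hE'G (hAE i0)
    have hQ3 := count_csh d ρ (hAE i0) hnm hb
    have hQ4 : ∑ e ∈ A i0, ∑ f ∈ A i0, (if e = f then (2:ℝ) else 0) ≤ 2 * m := by
      have hrow : ∀ e ∈ A i0, ∑ f ∈ A i0, (if e = f then (2:ℝ) else 0) ≤ 2 := by
        intro e he
        rw [Finset.sum_ite_eq (A i0) e (fun _ => (2:ℝ)), if_pos he]
      calc ∑ e ∈ A i0, ∑ f ∈ A i0, (if e = f then (2:ℝ) else 0)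
          ≤ ∑ _e ∈ A i0, (2:ℝ) := Finset.sum_le_sum hrow
        _ = 2 * m := by rw [Finset.sum_const, nsmul_eq_mul, hm]; ring
    have hlow : ∀ e ∈ A i0, ∀ f ∈ A i0,
        8 - 2 * (if ∃ x, x ∈ e ∧ x ∈ f then (1:ℝ) else 0)
          - 2 * (∑ c : Fin k, (if c ∈ colorPair ρ e then (1:ℝ) else 0) *
              (if c ∈ colorPair ρ f then 1 else 0))
          - (if e = f then (2:ℝ) else 0)
          ≤ ‖emb e - emb f‖ ^ 2 := by
      intro e he f hf
      by_cases hef : e = f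
      · subst hef
        rw [if_pos rfl, if_pos ⟨e.out.1, Sym2.out_fst_mem e, Sym2.out_fst_mem e⟩]
        have hself : ∑ c : Fin k, (if c ∈ colorPair ρ e then (1:ℝ) else 0) *
            (if c ∈ colorPair ρ e then 1 else 0) = ((colorPair ρ e).card : ℝ) := by
          rw [← ind_sum_card (colorPair ρ e)]
          exact Finset.sum_congr rfl fun c _ => by split_ifs <;> ring
        rw [hself, card_colorPair ρ (hnm e (hAE i0 he))]
        simp only [sub_self, norm_zero]
        norm_num
      · rw [if_neg hef]
        have := normB n k ρ (heD e (hAE i0 he)) (heD f (hAE i0 hf))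
          (hnm e (hAE i0 he)) (hnm f (hAE i0 hf)) hef
        linarith
    have hsum : 8 * m * m
        - 2 * (∑ e ∈ A i0, ∑ f ∈ A i0, (if ∃ x, x ∈ e ∧ x ∈ f then (1:ℝ) else 0))
        - 2 * (∑ e ∈ A i0, ∑ f ∈ A i0, (∑ c : Fin k,
            (if c ∈ colorPair ρ e then (1:ℝ) else 0) * (if c ∈ colorPair ρ f then 1 else 0)))
        - (∑ e ∈ A i0, ∑ f ∈ A i0, (if e = f then (2:ℝ) else 0))
        ≤ ∑ e ∈ A i0, ∑ f ∈ A i0, ‖emb e - emb f‖ ^ 2 := by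
      have expand : ∑ e ∈ A i0, ∑ f ∈ A i0,
          ((8:ℝ) - 2 * (if ∃ x, x ∈ e ∧ x ∈ f then (1:ℝ) else 0)
            - 2 * (∑ c : Fin k, (if c ∈ colorPair ρ e then (1:ℝ) else 0) *
                (if c ∈ colorPair ρ f then 1 else 0))
            - (if e = f then (2:ℝ) else 0)) =
          8 * m * m
          - 2 * (∑ e ∈ A i0, ∑ f ∈ A i0, (if ∃ x, x ∈ e ∧ x ∈ f then (1:ℝ) else 0))
          - 2 * (∑ e ∈ A i0, ∑ f ∈ A i0, (∑ c : Fin k,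
              (if c ∈ colorPair ρ e then (1:ℝ) else 0) * (if c ∈ colorPair ρ f then 1 else 0)))
          - (∑ e ∈ A i0, ∑ f ∈ A i0, (if e = f then (2:ℝ) else 0)) := by
        simp only [Finset.sum_sub_distrib, Finset.sum_const, nsmul_eq_mul, ← Finset.mul_sum]
        rw [hm]
        ring
      rw [← expand]
      exact Finset.sum_le_sum fun e he => Finset.sum_le_sum fun f hf => hlow e he f hf
    have hndk : 1.1 * (n:ℝ) * d / k ≤ 1.1 * k * d := by
      rw [div_le_iff₀ hkpos]
      nlinarith
    have hdk0 : (0:ℝ) ≤ (k:ℝ) * d := by positivity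
    have hm0 : (0:ℝ) ≤ m := by linarith
    have hZ : (∑ e ∈ A i0, ∑ f ∈ A i0, (∑ c : Fin k,
        (if c ∈ colorPair ρ e then (1:ℝ) else 0) * (if c ∈ colorPair ρ f then 1 else 0)))
        ≤ 2.2 * ((k:ℝ) * d) * m := by
      calc (∑ e ∈ A i0, ∑ f ∈ A i0, (∑ c : Fin k,
          (if c ∈ colorPair ρ e then (1:ℝ) else 0) * (if c ∈ colorPair ρ f then 1 else 0)))
          ≤ 1.1 * (n:ℝ) * d / k * (2 * ((A i0).card : ℝ)) := hQ3
        _ ≤ 1.1 * (k:ℝ) * d * (2 * ((A i0).card : ℝ)) := by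
            apply mul_le_mul_of_nonneg_right hndk
            exact mul_nonneg (by norm_num) (Nat.cast_nonneg _)
        _ = 2.2 * ((k:ℝ) * d) * ((A i0).card : ℝ) := by ring
        _ = 2.2 * ((k:ℝ) * d) * m := by rw [hm]
    have hmono : 10.2 * ((k:ℝ) * d) + 2 * d + 1 ≤ m := by
      nlinarith [hbigm, mul_nonneg (by linarith : (0:ℝ) ≤ (k:ℝ) - 3)
        (by linarith : (0:ℝ) ≤ (d:ℝ))]
    have hmain : 2 * m * (3 * m + 8 * (k * d)) ≤ 2 * m * oneMeansCost (C i0) := by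
      nlinarith [hsum, hpair, hQ2, hQ4, hZ, hm, hmono,
        mul_nonneg hm0 (by linarith : (0:ℝ) ≤ m - 2 * d - 10.2 * ((k:ℝ) * d) - 1)]
    have h2m : (0:ℝ) < 2 * m := by linarith
    exact le_of_mul_le_mul_left hmain h2m
  -- assemble
  rw [← Finset.add_sum_erase Finset.univ (fun i => oneMeansCost (C i)) (Finset.mem_univ i0)]
  have herase : ∑ i ∈ Finset.univ.erase i0, (3 * ((A i).card : ℝ) - 4 * d)
      ≤ ∑ i ∈ Finset.univ.erase i0, oneMeansCost (C i) :=
    Finset.sum_le_sum fun i _ => hsmall i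
  have hsum_erase : ∑ i ∈ Finset.univ.erase i0, (3 * ((A i).card : ℝ) - 4 * d) =
      3 * (((E'.image emb).card : ℝ) - ((A i0).card : ℝ))
        - 4 * d * ((Finset.univ.erase i0).card : ℝ) := by
    rw [Finset.sum_sub_distrib, Finset.sum_const, nsmul_eq_mul, ← Finset.mul_sum]
    have : ∑ i ∈ Finset.univ.erase i0, ((A i).card : ℝ) =
        ((E'.image emb).card : ℝ) - ((A i0).card : ℝ) := by
      have := Finset.add_sum_erase Finset.univ (fun i => ((A i).card : ℝ)) (Finset.mem_univ i0)
      rw [hN] at this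
      linarith
    rw [this]
    ring
  have hcarderase : ((Finset.univ.erase i0).card : ℝ) ≤ k := by
    have : (Finset.univ.erase i0).card ≤ (Finset.univ : Finset (Fin k)).card :=
      Finset.card_le_card (Finset.erase_subset _ _)
    simp at this
    calc ((Finset.univ.erase i0).card : ℝ) ≤ ((Finset.univ : Finset (Fin k)).card : ℝ) := by
          exact_mod_cast Finset.card_le_card (Finset.erase_subset _ _)
      _ = k := by simp
  have hd0 : (0:ℝ) ≤ d := by linarith
  have hce0 : (0:ℝ) ≤ ((Finset.univ.erase i0).card : ℝ) := Nat.cast_nonneg _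
  nlinarith [hbigcost, herase, hsum_erase, hcarderase, hd0, hce0]
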